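/- arXiv:1006.4352 — 2 statements merged into one kernel-verified Lean document; each statement's English description precedes it below -/
import Mathlib

section
/- Let I be a proper ideal of R = C^∞(M,ℝ) of finite codimension, and suppose I = I₁ ∩ ⋯ ∩ I_n where each I_i is an ideal of R whose spectrum is a singleton {y_i} and the points y₁, …, y_n are pairwise distinct. Then {y₁, …, y_n} = spec(I) and I_i = I + 𝔫_{y_i} for every i; in particular such a decomposition is unique up to permutation of the factors. -/
/-!
An ideal `J` of finite codimension contains every function vanishing on a neighbourhood `U` of
its spectrum. Indeed, for a smooth `ρ` with compact sublevel sets, the class of `ρ` in the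
finite-dimensional algebra `C^∞(M) ⧸ J` is a root of a monic polynomial `p`, so `p(ρ) ∈ J` has compact
zero set `Z`; adding a sum of squares of elements of `J` without common zero on the compact set
`Z \ U` gives an element of `J` vanishing only inside `U`, and it divides every function vanishing
on `U`. Hence `𝔫_{y i} ⊆ J i`. Conversely, a bump function `φ` equal to `1` near `y i` and to `0`
near the other `y j` splits `f ∈ J i` as `φ f ∈ ⋂ J j = I` plus `(1 - φ) f ∈ 𝔫_{y i}`. The spectrum
of a finite intersection is the union of the spectra, because the product of one element from
each factor lies in the intersection.
-/

open scoped Manifold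
open Module Filter Topology

noncomputable section

/-- The ℝ-algebra of smooth real-valued functions on a manifold `M` modelled on `ℝ^m`. -/
abbrev SmoothFns (m : ℕ) (M : Type*) [TopologicalSpace M]
    [ChartedSpace (EuclideanSpace ℝ (Fin m)) M] : Type _ :=
  C^(⊤ : ℕ∞)⟮𝓡 m, M; 𝓘(ℝ, ℝ), ℝ⟯

variable {m : ℕ} {M : Type*} [TopologicalSpace M] [T2Space M] [SecondCountableTopology M]
  [ChartedSpace (EuclideanSpace ℝ (Fin m)) M] [IsManifold (𝓡 m) (⊤ : ℕ∞) M]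

/-- The ideal `𝔪ₓ` of smooth functions vanishing at the point `x`. -/
def mIdeal (x : M) : Ideal (SmoothFns m M) where
  carrier := {f | f x = 0}
  add_mem' := by intro f g hf hg; simp_all
  zero_mem' := by simp
  smul_mem' := by intro c f hf; simp_all

/-- The ideal `𝔫ₓ` of smooth functions vanishing on some neighbourhood of the point `x`. -/
def nIdeal (x : M) : Ideal (SmoothFns m M) where
  carrier := {f | ∀ᶠ y in 𝓝 x, f y = 0}
  add_mem' := by
    intro f g hf hg
    filter_upwards [hf, hg] with y h1 h2
    simp [h1, h2]
  zero_mem' := by filter_upwards with y; simp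
  smul_mem' := by
    intro c f hf
    filter_upwards [hf] with y h
    simp [h]

/-- The spectrum of an ideal: the set of common zeros of its elements. -/
def idealSpec (I : Ideal (SmoothFns m M)) : Set M :=
  {x : M | ∀ f ∈ I, f x = 0}

omit [T2Space M] [SecondCountableTopology M] [IsManifold (𝓡 m) (⊤ : ℕ∞) M] in
theorem idealSpec_antitone : Antitone (idealSpec (m := m) (M := M)) :=
  fun _ _ hIJ _ hx f hf => hx f (hIJ hf)

omit [T2Space M] [SecondCountableTopology M] [IsManifold (𝓡 m) (⊤ : ℕ∞) M] in
theorem idealSpec_iInf {ι : Type*} [Finite ι] (J : ι → Ideal (SmoothFns m M)) :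
    idealSpec (⨅ i, J i) = ⋃ i, idealSpec (J i) := by
  have := Fintype.ofFinite ι
  refine subset_antisymm (fun x hx => ?_)
    (Set.iUnion_subset fun i => idealSpec_antitone (iInf_le J i))
  by_contra hnot
  simp only [Set.mem_iUnion, idealSpec, Set.mem_ofPred_eq, not_exists, not_forall] at hnot
  choose g hgJ hgx using hnot
  have hprod : ∏ i, g i ∈ ⨅ i, J i :=
    Ideal.mem_iInf.mpr fun i => Ideal.prod_mem (J i) (Finset.mem_univ i) (hgJ i)
  have hzero : ContMDiffMap.evalRingHom x (∏ i, g i) = 0 := hx _ hprod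
  rw [map_prod] at hzero
  exact Finset.prod_ne_zero_iff.mpr (fun i _ => hgx i) hzero

omit [T2Space M] [SecondCountableTopology M] [IsManifold (𝓡 m) (⊤ : ℕ∞) M] in
theorem dvd_of_eq_zero_on_isOpen {f h : SmoothFns m M} {U : Set M} (hU : IsOpen U)
    (hf : ∀ x ∈ U, f x = 0) (hh : ∀ x, h x = 0 → x ∈ U) : h ∣ f := by
  let q : M → ℝ := fun x => f x * (h x)⁻¹
  have hq : ContMDiff (𝓡 m) 𝓘(ℝ, ℝ) (⊤ : ℕ∞) q := by
    intro x
    by_cases hx : h x = 0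
    · refine contMDiffAt_const (c := (0 : ℝ)).congr_of_eventuallyEq ?_
      filter_upwards [hU.mem_nhds (hh x hx)] with z hz
      simp [q, hf z hz]
    · exact f.contMDiff.contMDiffAt.mul (h.contMDiff.contMDiffAt.inv₀ hx)
  refine ⟨⟨q, hq⟩, ContMDiffMap.ext fun x => ?_⟩
  change f x = h x * (f x * (h x)⁻¹)
  by_cases hx : h x = 0
  · simp [hf x (hh x hx), hx]
  · field_simp

omit [T2Space M] [SecondCountableTopology M] [IsManifold (𝓡 m) (⊤ : ℕ∞) M] in
theorem exists_mem_nonneg_pos_on_isCompact (J : Ideal (SmoothFns m M)) {K : Set M}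
    (hK : IsCompact K) (hJK : ∀ x ∈ K, ∃ g ∈ J, g x ≠ 0) :
    ∃ g ∈ J, (∀ x, 0 ≤ g x) ∧ ∀ x ∈ K, 0 < g x := by
  refine hK.induction_on ⟨0, J.zero_mem, fun _ => le_rfl, by simp⟩ ?_ ?_ fun x hx => ?_
  · rintro s t hst ⟨g, hgJ, hg0, hgt⟩
    exact ⟨g, hgJ, hg0, fun x hx => hgt x (hst hx)⟩
  · rintro s t ⟨g, hgJ, hg0, hgs⟩ ⟨g', hg'J, hg'0, hg't⟩
    refine ⟨g + g', J.add_mem hgJ hg'J, fun x => add_nonneg (hg0 x) (hg'0 x), fun x hx => ?_⟩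
    rcases hx with hs | ht
    · exact add_pos_of_pos_of_nonneg (hgs x hs) (hg'0 x)
    · exact add_pos_of_nonneg_of_pos (hg0 x) (hg't x ht)
  · obtain ⟨g, hgJ, hgx⟩ := hJK x hx
    exact ⟨{z | g z ≠ 0}, mem_nhdsWithin_of_mem_nhds
        ((isOpen_ne_fun g.contMDiff.continuous continuous_const).mem_nhds hgx),
      g * g, J.mul_mem_left g hgJ, fun z => mul_self_nonneg (g z), fun z hz => mul_self_pos.mpr hz⟩

theorem exists_smoothFns_isCompact_sublevel :
    ∃ ρ : SmoothFns m M, ∀ N : ℝ, IsCompact {x | ρ x ≤ N} := by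
  have := ChartedSpace.locallyCompactSpace (EuclideanSpace ℝ (Fin m)) M
  let K := CompactExhaustion.choice M
  -- `K.find` is locally bounded since `x ∈ interior (K (K.find x + 1))`, so it has a smooth majorant.
  obtain ⟨ρ, hρ⟩ := exists_contMDiffMap_forall_mem_convex_of_local_const (𝓡 m) (n := ⊤)
    (t := fun x => Set.Ioi (K.find x : ℝ)) (fun _ => convex_Ioi _) fun x =>
      ⟨K.find x + 2, by
        filter_upwards [mem_interior_iff_mem_nhds.mp (K.subset_interior_succ _ (K.mem_find x))]
          with z hz
        have : K.find z ≤ K.find x + 1 := K.mem_iff_find_le.mp hz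
        simp only [Set.mem_Ioi]
        exact_mod_cast (by omega : K.find z < K.find x + 2)⟩
  refine ⟨ρ, fun N => (K.isCompact ⌈N⌉₊).of_isClosed_subset
    (isClosed_le ρ.contMDiff.continuous continuous_const) fun x hx => K.mem_iff_find_le.mpr ?_⟩
  have : (K.find x : ℝ) < ⌈N⌉₊ := (hρ x).trans_le (hx.trans (Nat.le_ceil N))
  exact_mod_cast this.le

theorem exists_mem_isCompact_zeroSet (J : Ideal (SmoothFns m M))
    [FiniteDimensional ℝ (SmoothFns m M ⧸ J)] : ∃ h ∈ J, IsCompact {x | h x = 0} := by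
  obtain ⟨ρ, hρ⟩ := exists_smoothFns_isCompact_sublevel (m := m) (M := M)
  obtain ⟨p, hp, hpρ⟩ := IsIntegral.of_finite ℝ (Ideal.Quotient.mkₐ ℝ J ρ)
  have hmem : Polynomial.aeval ρ p ∈ J := by
    rwa [← Ideal.Quotient.eq_zero_iff_mem, ← Ideal.Quotient.mkₐ_eq_mk ℝ,
      ← Polynomial.aeval_algHom_apply, Polynomial.aeval_def]
  have heval : ∀ x, Polynomial.aeval ρ p x = p.eval (ρ x) := fun x => by
    simpa using (Polynomial.aeval_algHom_apply
      ((Pi.evalAlgHom ℝ (fun _ : M => ℝ) x).comp ContMDiffMap.coeFnAlgHom) ρ p).symm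
  obtain ⟨B, hB⟩ := (p.finite_setOfPred_isRoot hp.ne_zero).bddAbove
  refine ⟨_, hmem, (hρ B).of_isClosed_subset
    (isClosed_eq (Polynomial.aeval ρ p).contMDiff.continuous continuous_const) fun x hx => ?_⟩
  exact hB (show p.IsRoot (ρ x) by rw [Polynomial.IsRoot, ← heval]; exact hx)

theorem mem_of_eq_zero_on_isOpen (J : Ideal (SmoothFns m M))
    [FiniteDimensional ℝ (SmoothFns m M ⧸ J)] {U : Set M} (hU : IsOpen U)
    (hJU : idealSpec J ⊆ U) {f : SmoothFns m M} (hf : ∀ x ∈ U, f x = 0) : f ∈ J := by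
  obtain ⟨h, hhJ, hh⟩ := exists_mem_isCompact_zeroSet J
  obtain ⟨g, hgJ, hg0, hgpos⟩ := exists_mem_nonneg_pos_on_isCompact J (hh.diff hU) fun x hx => by
    simpa [idealSpec] using fun hx' => hx.2 (hJU hx')
  obtain ⟨q, rfl⟩ := dvd_of_eq_zero_on_isOpen (h := h * h + g) hU hf fun x hx => by
    by_contra hxU
    obtain ⟨hhx, hgx⟩ := (add_eq_zero_iff_of_nonneg (mul_self_nonneg (h x)) (hg0 x)).mp hx
    exact (hgpos x ⟨mul_self_eq_zero.mp hhx, hxU⟩).ne' hgx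
  exact J.mul_mem_right q (J.add_mem (J.mul_mem_left h hhJ) hgJ)

theorem nIdeal_le_of_idealSpec_subset (J : Ideal (SmoothFns m M))
    [FiniteDimensional ℝ (SmoothFns m M ⧸ J)] {x : M} (hJ : idealSpec J ⊆ {x}) :
    nIdeal x ≤ J := fun f hf => by
  obtain ⟨U, hfU, hU, hxU⟩ := eventually_nhds_iff.mp hf
  exact mem_of_eq_zero_on_isOpen J hU (hJ.trans (Set.singleton_subset_iff.mpr hxU)) hfU

theorem le_iInf_sup_nIdeal {ι : Type*} [Finite ι] {y : ι → M} (hy : Function.Injective y)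
    (J : ι → Ideal (SmoothFns m M)) (i : ι) (hJ : ∀ j ≠ i, nIdeal (y j) ≤ J j) :
    J i ≤ (⨅ j, J j) ⊔ nIdeal (y i) := by
  have := ChartedSpace.locallyCompactSpace (EuclideanSpace ℝ (Fin m)) M
  have hS : IsClosed (y '' {j | j ≠ i}) := ((Set.toFinite _).image y).isClosed
  have hdisj : Disjoint (y '' {j | j ≠ i}) {y i} :=
    Set.disjoint_singleton_right.mpr fun ⟨j, hj, hji⟩ => hj (hy hji)
  obtain ⟨φ, hφ0, hφ1, -⟩ :=
    exists_contMDiffMap_zero_one_nhds_of_isClosed (𝓡 m) (n := ⊤) hS isClosed_singleton hdisj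
  intro f hf
  rw [← show φ * f + (1 - φ) * f = f by ring]
  refine Submodule.add_mem_sup (Ideal.mem_iInf.mpr fun j => ?_) ?_
  · rcases eq_or_ne j i with rfl | hj
    · exact (J j).mul_mem_left φ hf
    · refine hJ j hj ?_
      filter_upwards [hφ0.filter_mono (nhds_le_nhdsSet (Set.mem_image_of_mem y hj))] with z hz
      simp [hz]
  · filter_upwards [hφ1.filter_mono (nhds_le_nhdsSet (Set.mem_singleton (y i)))] with z hz
    simp [hz]

theorem primary_decomposition_unique_general
    (I : Ideal (SmoothFns m M))
    (hfd : FiniteDimensional ℝ (SmoothFns m M ⧸ I))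
    (n : ℕ) (y : Fin n → M) (hy : Function.Injective y)
    (J : Fin n → Ideal (SmoothFns m M))
    (hJspec : ∀ i, idealSpec (J i) = {y i})
    (hdec : I = ⨅ i, J i) :
    idealSpec I = Set.range y ∧ ∀ i, J i = I + nIdeal (y i) := by
  have hIJ : ∀ i, I ≤ J i := fun i => hdec ▸ iInf_le J i
  have hnJ : ∀ i, nIdeal (y i) ≤ J i := fun i =>
    have := Module.Finite.of_surjective (Ideal.Quotient.factorₐ ℝ (hIJ i)).toLinearMap
      (Ideal.Quotient.factor_surjective (hIJ i))
    nIdeal_le_of_idealSpec_subset (J i) (hJspec i).le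
  refine ⟨by simp only [hdec, idealSpec_iInf, hJspec, Set.iUnion_singleton_eq_range], fun i => ?_⟩
  rw [Submodule.add_eq_sup]
  refine le_antisymm ?_ (sup_le (hIJ i) (hnJ i))
  exact hdec ▸ le_iInf_sup_nIdeal hy J i fun j _ => hnJ j

/-- Uniqueness of the primary decomposition: if a proper ideal `I` of finite
codimension is the intersection of ideals `J i` whose spectra are distinct singletons `{y i}`,
then `{y 1, …, y n} = spec I` and `J i = I + 𝔫_{y i}` for every `i`. -/
theorem primary_decomposition_unique
    (I : Ideal (SmoothFns m M)) (hI : I ≠ ⊤)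
    (hfd : FiniteDimensional ℝ (SmoothFns m M ⧸ I))
    (n : ℕ) (y : Fin n → M) (hy : Function.Injective y)
    (J : Fin n → Ideal (SmoothFns m M))
    (hJspec : ∀ i, idealSpec (J i) = {y i})
    (hdec : I = ⨅ i, J i) :
    idealSpec I = Set.range y ∧ ∀ i, J i = I + nIdeal (y i) :=
  primary_decomposition_unique_general I hfd n y hy J hJspec hdec
end
end

section
/- Every ideal I of R = C^∞(M,ℝ) with dim_ℝ(R/I) = 1 is of the form 𝔪_x = {f ∈ R | f(x) = 0} for a unique point x ∈ M. Equivalently, every maximal ideal of R of finite codimension corresponds to a point of M. -/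
/-! The image of a proper smooth function `h` in the finite-dimensional algebra `R ⧸ I` satisfies
a polynomial `p`, so `I` contains `p ∘ h`, whose zero set is compact. If the elements of `I` had no
common zero, the squares of finitely many of them, added to `(p ∘ h)²`, would give a nowhere
vanishing, hence invertible, element of `I`. Thus a proper ideal of finite codimension lies in some
`𝔪ₓ`, and a maximal one equals it; bump functions separate the ideals `𝔪ₓ`. -/

open scoped Manifold
open Module Filter Topology

noncomputable section

variable {m : ℕ} {M : Type*} [TopologicalSpace M] [T2Space M] [SecondCountableTopology M]
  [ChartedSpace (EuclideanSpace ℝ (Fin m)) M] [IsManifold (𝓡 m) (⊤ : ℕ∞) M]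

open scoped ContDiff

section Exhaustion

variable {E H N : Type*} [NormedAddCommGroup E] [NormedSpace ℝ E] [FiniteDimensional ℝ E]
  [TopologicalSpace H] (I : ModelWithCorners ℝ E H) [TopologicalSpace N] [ChartedSpace H N]
  [IsManifold I ∞ N] [T2Space N] [SigmaCompactSpace N]

theorem exists_contMDiffMap_isCompact_preimage_Iic :
    ∃ h : C^∞⟮I, N; 𝓘(ℝ, ℝ), ℝ⟯, ∀ c : ℝ, IsCompact (h ⁻¹' Set.Iic c) := by
  have := I.locallyCompactSpace
  have := ChartedSpace.locallyCompactSpace H N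
  let K := CompactExhaustion.choice N
  obtain ⟨ψ, hψ⟩ := SmoothPartitionOfUnity.exists_isSubordinate I isClosed_univ
    (fun n ↦ interior (K (n + 1))) (fun _ ↦ isOpen_interior)
    (fun x _ ↦ Set.mem_iUnion.2 ⟨K.find x, K.subset_interior_succ _ (K.mem_find x)⟩)
  refine ⟨⟨fun x ↦ ∑ᶠ n, ψ n x • (n : ℝ),
    hψ.contMDiff_finsum_smul (fun _ ↦ isOpen_interior) (fun _ ↦ contMDiffOn_const)⟩, fun c ↦ ?_⟩
  refine (K.isCompact (⌈c⌉₊ + 1)).of_isClosed_subset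
    (isClosed_Iic.preimage (ContMDiffMap.contMDiff _).continuous) fun x hx ↦ ?_
  by_contra hxK
  -- the value at `x` averages indices `n` with `x ∈ K (n + 1)`, and each of them exceeds `⌈c⌉₊`
  have hlarge : ∑ᶠ n, ψ n x • (n : ℝ) ∈ Set.Ici ((⌈c⌉₊ + 1 : ℕ) : ℝ) :=
    ψ.finsum_smul_mem_convex (g := fun n _ ↦ (n : ℝ)) (Set.mem_univ x) (fun n hn ↦ by
      have hxn : x ∈ K (n + 1) := interior_subset (hψ n (subset_tsupport _ hn))
      have : ⌈c⌉₊ + 1 < n + 1 := lt_of_not_ge fun hle ↦ hxK (K.subset hle hxn)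
      exact Set.mem_Ici.2 (by exact_mod_cast (show ⌈c⌉₊ + 1 ≤ n by omega))) (convex_Ici _)
  have hceil : c < ((⌈c⌉₊ + 1 : ℕ) : ℝ) := by push_cast; linarith [Nat.le_ceil c]
  exact (not_lt.2 hx) (hceil.trans_le hlarge)

end Exhaustion

namespace ContMDiffMap

variable {E H N : Type*} [NormedAddCommGroup E] [NormedSpace ℝ E] [TopologicalSpace H]
  {I : ModelWithCorners ℝ E H} [TopologicalSpace N] [ChartedSpace H N] {n : WithTop ℕ∞}

theorem isUnit_of_forall_ne_zero (f : C^n⟮I, N; 𝓘(ℝ, ℝ), ℝ⟯) (hf : ∀ x, f x ≠ 0) : IsUnit f :=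
  IsUnit.of_mul_eq_one ⟨fun x ↦ (f x)⁻¹, f.contMDiff.inv₀ hf⟩ <| ext fun x ↦ mul_inv_cancel₀ (hf x)

theorem aeval_apply (f : C^n⟮I, N; 𝓘(ℝ, ℝ), ℝ⟯) (p : Polynomial ℝ) (x : N) :
    Polynomial.aeval f p x = p.eval (f x) := by
  simpa [Polynomial.aeval_fn_apply] using
    congrFun (Polynomial.aeval_algHom_apply coeFnAlgHom f p).symm x

end ContMDiffMap

theorem Ideal.isMaximal_of_finrank_quotient_eq_one {K A : Type*} [Field K] [CommRing A]
    [Algebra K A] {I : Ideal A} (h : finrank K (A ⧸ I) = 1) : I.IsMaximal := by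
  have hbij := Algebra.finrank_eq_one_iff_bijective_algebraMap.1 h
  exact Ideal.Quotient.maximal_of_isField I <|
    (RingEquiv.ofBijective _ hbij).symm.toMulEquiv.isField (Field.toIsField K)

section PointIdeals

variable {d : ℕ} {N : Type*} [TopologicalSpace N] [ChartedSpace (EuclideanSpace ℝ (Fin d)) N]

theorem mIdeal_ne_top (x : N) : mIdeal (m := d) x ≠ ⊤ :=
  (Ideal.ne_top_iff_one _).2 fun h ↦ one_ne_zero (h : (1 : SmoothFns d N) x = 0)

theorem Ideal.IsMaximal.eq_mIdeal {I : Ideal (SmoothFns d N)} (hI : I.IsMaximal) {x : N}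
    (hx : x ∈ idealSpec I) : I = mIdeal x :=
  hI.eq_of_le (mIdeal_ne_top x) hx

theorem mIdeal_injective [T2Space N] [SigmaCompactSpace N] [IsManifold (𝓡 d) ∞ N] :
    Function.Injective (mIdeal : N → Ideal (SmoothFns d N)) := by
  intro x y hxy
  by_contra hne
  obtain ⟨f, hfx, hfy, -⟩ := exists_contMDiffMap_zero_one_of_isClosed (𝓡 d) (n := (⊤ : ℕ∞))
    isClosed_singleton isClosed_singleton (Set.disjoint_singleton.2 hne)
  have hfy₀ : f ∈ mIdeal y := hxy ▸ hfx rfl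
  exact zero_ne_one ((hfy₀ : f y = 0).symm.trans (hfy rfl))

theorem exists_mem_isCompact_zeroSet_s6 [T2Space N] [SigmaCompactSpace N] [IsManifold (𝓡 d) ∞ N]
    (I : Ideal (SmoothFns d N)) [FiniteDimensional ℝ (SmoothFns d N ⧸ I)] :
    ∃ g ∈ I, IsCompact {x | g x = 0} := by
  obtain ⟨h, hh⟩ := exists_contMDiffMap_isCompact_preimage_Iic (𝓡 d) (N := N)
  obtain ⟨p, hp, hph⟩ : IsIntegral ℝ (Ideal.Quotient.mk I h) := .of_finite ℝ _
  obtain ⟨c, hc⟩ := (Polynomial.finite_setOfPred_isRoot hp.ne_zero).bddAbove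
  refine ⟨Polynomial.aeval h p, ?_, (hh c).of_isClosed_subset ?_ fun x hx ↦ hc ?_⟩
  · rw [← Ideal.Quotient.eq_zero_iff_mem, ← Ideal.Quotient.mkₐ_eq_mk ℝ,
      ← Polynomial.aeval_algHom_apply]
    exact hph
  · exact isClosed_eq (ContMDiffMap.contMDiff _).continuous continuous_const
  · simpa [ContMDiffMap.aeval_apply] using hx

theorem idealSpec_nonempty_of_isCompact_zeroSet {I : Ideal (SmoothFns d N)} (hI : I ≠ ⊤)
    {g : SmoothFns d N} (hgI : g ∈ I) (hg : IsCompact {x | g x = 0}) :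
    (idealSpec I).Nonempty := by
  by_contra hempty
  have : ∀ x, ∃ f ∈ I, f x ≠ 0 := by
    simpa [idealSpec, Set.not_nonempty_iff_eq_empty, Set.eq_empty_iff_forall_notMem] using hempty
  choose F hFI hF using this
  obtain ⟨t, ht⟩ := hg.elim_finite_subcover (fun x ↦ {y | F x y ≠ 0})
    (fun x ↦ isOpen_ne.preimage (F x).contMDiff.continuous)
    (fun x _ ↦ Set.mem_iUnion.2 ⟨x, hF x⟩)
  -- `G` vanishes nowhere: off the zero set of `g` by its first term, on it by the cover
  let G := g ^ 2 + ∑ x ∈ t, F x ^ 2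
  have hGI : G ∈ I := I.add_mem (I.pow_mem_of_mem hgI 2 two_pos)
    (I.sum_mem fun x _ ↦ I.pow_mem_of_mem (hFI x) 2 two_pos)
  have hG : ∀ y, G y ≠ 0 := by
    intro y
    have hGy : G y = g y ^ 2 + ∑ x ∈ t, F x y ^ 2 := by
      simp only [G, ContMDiffMap.coe_add, ContMDiffMap.coe_pow, Pi.add_apply, Pi.pow_apply]
      congr 1
      exact (map_sum (ContMDiffMap.evalRingHom (I := 𝓡 d) (I' := 𝓘(ℝ, ℝ)) y) _ t).trans
        (t.sum_congr rfl fun x _ ↦ map_pow _ _ _)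
    have hsum : 0 ≤ ∑ x ∈ t, F x y ^ 2 := t.sum_nonneg fun x _ ↦ sq_nonneg _
    rw [hGy]
    by_cases hgy : g y = 0
    · obtain ⟨x, hxt, hxy⟩ := Set.mem_iUnion₂.1 (ht hgy)
      have : 0 < ∑ x ∈ t, F x y ^ 2 :=
        t.sum_pos' (fun x _ ↦ sq_nonneg _) ⟨x, hxt, sq_pos_of_ne_zero hxy⟩
      linarith [sq_nonneg (g y)]
    · linarith [sq_pos_of_ne_zero hgy]
  exact hI (I.eq_top_of_isUnit_mem hGI (G.isUnit_of_forall_ne_zero hG))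

theorem exists_eq_mIdeal_of_isMaximal [T2Space N] [SigmaCompactSpace N]
    [IsManifold (𝓡 d) ∞ N] {I : Ideal (SmoothFns d N)} (hI : I.IsMaximal)
    [FiniteDimensional ℝ (SmoothFns d N ⧸ I)] : ∃ x, I = mIdeal x := by
  obtain ⟨g, hgI, hg⟩ := exists_mem_isCompact_zeroSet_s6 I
  obtain ⟨x, hx⟩ := idealSpec_nonempty_of_isCompact_zeroSet hI.ne_top hgI hg
  exact ⟨x, hI.eq_mIdeal hx⟩

end PointIdeals

theorem codim_one_ideals_are_point_ideals_general :
    (∀ I : Ideal (SmoothFns m M),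
        Module.finrank ℝ (SmoothFns m M ⧸ I) = 1 → ∃! x : M, I = mIdeal x) ∧
    (∀ I : Ideal (SmoothFns m M), I.IsMaximal →
        FiniteDimensional ℝ (SmoothFns m M ⧸ I) → ∃ x : M, I = mIdeal x) := by
  have := ChartedSpace.locallyCompactSpace (EuclideanSpace ℝ (Fin m)) M
  refine ⟨fun I hI ↦ ?_, fun I hI _ ↦ exists_eq_mIdeal_of_isMaximal hI⟩
  have := Module.finite_of_finrank_eq_succ hI
  obtain ⟨x, hx⟩ := exists_eq_mIdeal_of_isMaximal (Ideal.isMaximal_of_finrank_quotient_eq_one hI)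
  exact ⟨x, hx, fun y hy ↦ mIdeal_injective (hy.symm.trans hx)⟩

/-- Every ideal of `R = C^∞(M,ℝ)` of codimension `1` is of the form
`𝔪ₓ = {f | f x = 0}` for a unique point `x ∈ M`; equivalently, every maximal ideal of `R`
of finite codimension corresponds to a point of `M`. -/
theorem codim_one_ideals_are_point_ideals [Nonempty M] :
    (∀ I : Ideal (SmoothFns m M),
        Module.finrank ℝ (SmoothFns m M ⧸ I) = 1 → ∃! x : M, I = mIdeal x) ∧
    (∀ I : Ideal (SmoothFns m M), I.IsMaximal →
        FiniteDimensional ℝ (SmoothFns m M ⧸ I) → ∃ x : M, I = mIdeal x) :=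
  codim_one_ideals_are_point_ideals_general
end
end
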